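/- (Bounded iterates of NEAR-DGDᵗ) Suppose 0 < α < 1/L and the algorithm is initialized with y_{i,0} = s_0 for all i. Then the NEAR-DGDᵗ iterates are bounded: ‖x_k‖ ≤ D and ‖y_k‖ ≤ D for all k ≥ 1, where D = ‖y_0 − u*‖ + ((ν + 4)/ν)‖u*‖, u* = (u_1*;…;u_n*) with u_i* = argmin f_i, ν = 2αγ, γ = min_i γ_i and γ_i = μ_i L_i/(μ_i + L_i). -/

import Mathlib

open Finset Filter

noncomputable section

/-- A block `ℝ^p` with the Euclidean norm. -/
abbrev Vec (p : ℕ) := EuclideanSpace ℝ (Fin p)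

/-- The concatenated space `ℝ^{np}` (n blocks of size p) with the Euclidean norm. -/
abbrev CVec (n p : ℕ) := PiLp 2 (fun _ : Fin n => Vec p)

/-- Action of the Kronecker product `W ⊗ I_p` on a concatenated vector of `ℝ^{np}`. -/
def kron {n p : ℕ} (W : Matrix (Fin n) (Fin n) ℝ) (x : CVec n p) : CVec n p :=
  WithLp.toLp 2 fun i => ∑ j, W i j • x j

/-- Concatenated gradient `∇f(x) = (∇f₁(x₁); …; ∇fₙ(xₙ))`. -/
def gradConcat {n p : ℕ} (f : Fin n → Vec p → ℝ) (x : CVec n p) : CVec n p :=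
  WithLp.toLp 2 fun i => gradient (f i) (x i)

/-!
Each local gradient step `z ↦ z - α ∇fᵢ z` contracts the squared distance to `uᵢ*` by the factor
`1 - 2αγᵢ ≤ 1 - ν`: this is the coercivity inequality
`‖∇f x - ∇f y‖² + μL‖x - y‖² ≤ (μ + L)⟪∇f x - ∇f y, x - y⟫`, i.e. cocoercivity of the gradient of
the convex, `(L - μ)`-smooth function `f - μ/2 ‖·‖²`. The consensus step `Wᵗ ⊗ I_p` is doubly
stochastic, hence nonexpansive, so it moves `y_k - u*` by at most `2‖u*‖`. Therefore
`e_k = ‖y_k - u*‖` obeys `e_{k+1} ≤ (1 - ν/2)(e_k + 2‖u*‖)`, which keeps `e_k ≤ e_0 + 4‖u*‖/ν`,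
and `‖x_k‖ ≤ ‖y_k‖ ≤ e_k + ‖u*‖ ≤ D`.
-/

open Set AffineMap
open scoped RealInnerProductSpace NNReal Gradient

section InnerProductSpace

variable {E : Type*} [NormedAddCommGroup E] [InnerProductSpace ℝ E]

theorem norm_sub_sq_le_mul_inner_of_quadratic_bounds {g : E → ℝ} {g' : E → E} {ℓ : ℝ}
    (hℓ : 0 ≤ ℓ) (hlow : ∀ a b, g a + ⟪g' a, b - a⟫ ≤ g b)
    (hup : ∀ a b, g b ≤ g a + ⟪g' a, b - a⟫ + ℓ / 2 * ‖b - a‖ ^ 2) (x y : E) :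
    ‖g' x - g' y‖ ^ 2 ≤ ℓ * ⟪g' x - g' y, x - y⟫ := by
  -- the lower bound at `a` and the upper bound at `b`, both taken at `b - t • (g' b - g' a)`
  have hside : ∀ a b (t : ℝ),
      g a + ⟪g' a, b - a⟫ + t * (1 - ℓ * t / 2) * ‖g' b - g' a‖ ^ 2 ≤ g b := by
    intro a b t
    have h1 := hlow a (b - t • (g' b - g' a))
    have h2 := hup b (b - t • (g' b - g' a))
    rw [show b - t • (g' b - g' a) - a = (b - a) - t • (g' b - g' a) by abel,
      inner_sub_right, inner_smul_right] at h1
    rw [sub_sub_cancel_left, inner_neg_right, inner_smul_right, norm_neg, norm_smul,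
      Real.norm_eq_abs, mul_pow, sq_abs] at h2
    have h3 : t * ⟪g' b, g' b - g' a⟫ - t * ⟪g' a, g' b - g' a⟫ = t * ‖g' b - g' a‖ ^ 2 := by
      rw [← mul_sub, ← inner_sub_left, real_inner_self_eq_norm_sq]
    linarith
  have hfamily : ∀ t : ℝ, t * (2 - ℓ * t) * ‖g' x - g' y‖ ^ 2 ≤ ⟪g' x - g' y, x - y⟫ := by
    intro t
    have h1 := hside x y t
    have h2 := hside y x t
    rw [← norm_neg, neg_sub] at h1
    have h3 : ⟪g' x - g' y, x - y⟫ = -⟪g' x, y - x⟫ - ⟪g' y, x - y⟫ := by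
      rw [inner_sub_left, ← inner_neg_right, neg_sub]
    linarith
  rcases hℓ.lt_or_eq with hℓ | rfl
  · calc ‖g' x - g' y‖ ^ 2 = ℓ * (ℓ⁻¹ * (2 - ℓ * ℓ⁻¹) * ‖g' x - g' y‖ ^ 2) := by
          field_simp; ring
      _ ≤ ℓ * ⟪g' x - g' y, x - y⟫ := by gcongr; exact hfamily _
  · rw [zero_mul]
    by_contra! hpos
    have hne : ‖g' x - g' y‖ ≠ 0 := fun h => by simp [h] at hpos
    have key := hfamily ((⟪g' x - g' y, x - y⟫ + 1) / (2 * ‖g' x - g' y‖ ^ 2))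
    rw [zero_mul, sub_zero] at key
    field_simp at key
    linarith

end InnerProductSpace

section Gradient

variable {E : Type*} [NormedAddCommGroup E] [InnerProductSpace ℝ E] [CompleteSpace E]
  {f : E → ℝ}

theorem hasDerivAt_comp_lineMap (hf : Differentiable ℝ f) (x y : E) (s : ℝ) :
    HasDerivAt (fun s => f (lineMap x y s)) ⟪∇ f (lineMap x y s), y - x⟫ s := by
  rw [inner_gradient_left]
  exact (hf _).hasFDerivAt.comp_hasDerivAt s hasDerivAt_lineMap

theorem StrongConvexOn.apply_add_inner_gradient_add_sq_le {μ : ℝ}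
    (hsc : StrongConvexOn univ μ f) (hf : Differentiable ℝ f) (x y : E) :
    f x + ⟪∇ f x, y - x⟫ + μ / 2 * ‖y - x‖ ^ 2 ≤ f y := by
  have hconv := (strongConvexOn_iff_convex.1 hsc).comp_affineMap (lineMap (k := ℝ) x y)
  have hderiv : HasDerivAt (fun s => f (lineMap x y s) -
      μ / 2 * ‖lineMap (k := ℝ) x y s‖ ^ 2) (⟪∇ f x, y - x⟫ - μ * ⟪x, y - x⟫) 0 := by
    refine ((hasDerivAt_comp_lineMap hf x y 0).sub
      (hasDerivAt_lineMap.norm_sq.const_mul (μ / 2))).congr_deriv ?_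
    simp only [lineMap_apply_zero]
    ring
  have := hconv.le_slope_of_hasDerivAt (mem_univ 0) (mem_univ 1) one_pos hderiv
  simp only [slope_def_field, Function.comp_apply, lineMap_apply_zero,
    lineMap_apply_one, sub_zero, div_one] at this
  have hnorm := norm_add_sq_real x (y - x)
  rw [add_sub_cancel] at hnorm
  rw [hnorm] at this
  linarith

theorem apply_le_add_inner_gradient_add_sq {K : ℝ≥0} (hf : Differentiable ℝ f)
    (hK : LipschitzWith K (∇ f)) (x y : E) :
    f y ≤ f x + ⟪∇ f x, y - x⟫ + K / 2 * ‖y - x‖ ^ 2 := by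
  set φ : ℝ → ℝ := fun s =>
    f (lineMap x y s) - s * ⟪∇ f x, y - x⟫ - s ^ 2 * (K / 2 * ‖y - x‖ ^ 2)
  have hφ : ∀ s, HasDerivAt φ
      (⟪∇ f (lineMap x y s) - ∇ f x, y - x⟫ - s * (K * ‖y - x‖ ^ 2)) s := by
    intro s
    refine (((hasDerivAt_comp_lineMap hf x y s).sub
      ((hasDerivAt_id' s).mul_const ⟪∇ f x, y - x⟫)).sub
      ((hasDerivAt_pow 2 s).mul_const (K / 2 * ‖y - x‖ ^ 2))).congr_deriv ?_
    rw [inner_sub_left]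
    push_cast
    ring
  have hslope : ∀ s ∈ interior (Ici (0 : ℝ)),
      ⟪∇ f (lineMap x y s) - ∇ f x, y - x⟫ - s * (K * ‖y - x‖ ^ 2) ≤ 0 := by
    intro s hs
    rw [interior_Ici, Set.mem_Ioi] at hs
    have hLip := hK.dist_le_mul (lineMap x y s) x
    rw [dist_lineMap_left, dist_eq_norm, dist_eq_norm', Real.norm_of_nonneg hs.le] at hLip
    nlinarith [real_inner_le_norm (∇ f (lineMap x y s) - ∇ f x) (y - x),
      norm_nonneg (y - x)]
  have hanti : AntitoneOn φ (Ici 0) :=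
    antitoneOn_of_hasDerivWithinAt_nonpos (convex_Ici 0)
      (fun s _ => (hφ s).continuousAt.continuousWithinAt)
      (fun s _ => (hφ s).hasDerivWithinAt) hslope
  have := hanti (Set.mem_Ici.2 le_rfl) (Set.mem_Ici.2 zero_le_one) zero_le_one
  simp only [φ, lineMap_apply_zero, lineMap_apply_one] at this
  linarith

section StrongConvex

variable {μ : ℝ} {K : ℝ≥0}

theorem StrongConvexOn.le_of_lipschitzWith_gradient [Nontrivial E]
    (hsc : StrongConvexOn univ μ f) (hf : Differentiable ℝ f) (hK : LipschitzWith K (∇ f)) :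
    μ ≤ K := by
  obtain ⟨d, hd⟩ := exists_ne (0 : E)
  have hlow := hsc.apply_add_inner_gradient_add_sq_le hf 0 d
  have hup := apply_le_add_inner_gradient_add_sq hf hK 0 d
  have hpos : 0 < ‖d - 0‖ ^ 2 := by rw [sub_zero]; exact pow_pos (norm_pos_iff.2 hd) 2
  nlinarith

theorem StrongConvexOn.gradient_coercive (hsc : StrongConvexOn univ μ f)
    (hf : Differentiable ℝ f) (hK : LipschitzWith K (∇ f)) (hμK : μ ≤ K) (x y : E) :
    ‖∇ f x - ∇ f y‖ ^ 2 + μ * K * ‖x - y‖ ^ 2 ≤ (μ + K) * ⟪∇ f x - ∇ f y, x - y⟫ := by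
  -- `f - μ/2 ‖·‖²` is convex and `(K - μ)`-smooth, so its gradient is cocoercive
  have key := norm_sub_sq_le_mul_inner_of_quadratic_bounds (sub_nonneg.2 hμK)
    (g := fun z => f z - μ / 2 * ‖z‖ ^ 2) (g' := fun z => ∇ f z - μ • z)
    (fun a b => ?_) (fun a b => ?_) x y
  · have hinner : ⟪∇ f x - ∇ f y - μ • (x - y), x - y⟫
        = ⟪∇ f x - ∇ f y, x - y⟫ - μ * ‖x - y‖ ^ 2 := by
      rw [inner_sub_left, real_inner_smul_left, real_inner_self_eq_norm_sq]
    rw [show ∇ f x - μ • x - (∇ f y - μ • y) = ∇ f x - ∇ f y - μ • (x - y) by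
      rw [smul_sub]; abel, hinner, norm_sub_sq_real, real_inner_smul_right, norm_smul, mul_pow,
      Real.norm_eq_abs, sq_abs] at key
    nlinarith
  · have := hsc.apply_add_inner_gradient_add_sq_le hf a b
    have hnorm := norm_add_sq_real a (b - a)
    rw [add_sub_cancel] at hnorm
    rw [hnorm, inner_sub_left, real_inner_smul_left]
    linarith
  · have := apply_le_add_inner_gradient_add_sq hf hK a b
    have hnorm := norm_add_sq_real a (b - a)
    rw [add_sub_cancel] at hnorm
    rw [hnorm, inner_sub_left, real_inner_smul_left]
    linarith

theorem StrongConvexOn.norm_sub_smul_gradient_sub_sq_le (hsc : StrongConvexOn univ μ f)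
    (hf : Differentiable ℝ f) (hK : LipschitzWith K (∇ f)) (hμ : 0 < μ) (hμK : μ ≤ K)
    {u : E} (hu : ∀ z, f u ≤ f z) {α γ : ℝ} (hα : 0 ≤ α) (hαK : α * (μ + K) ≤ 2)
    (hγ : γ ≤ μ * K / (μ + K)) (z : E) :
    ‖z - α • ∇ f z - u‖ ^ 2 ≤ (1 - 2 * α * γ) * ‖z - u‖ ^ 2 := by
  have hgrad_u : ∇ f u = 0 := by
    rw [gradient, IsLocalMin.fderiv_eq_zero (Eventually.of_forall hu), map_zero]
  have hco := hsc.gradient_coercive hf hK hμK z u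
  rw [hgrad_u, sub_zero] at hco
  have hS : 0 < μ + K := by positivity
  have hstep : α * (α * (μ + K)) * ‖∇ f z‖ ^ 2 ≤ α * 2 * ‖∇ f z‖ ^ 2 := by gcongr
  rw [show z - α • ∇ f z - u = (z - u) - α • ∇ f z by abel, norm_sub_sq_real,
    real_inner_smul_right, norm_smul, mul_pow, Real.norm_eq_abs, sq_abs, real_inner_comm,
    ← mul_le_mul_iff_of_pos_left hS]
  have hγ' : γ * (μ + K) ≤ μ * K := (le_div_iff₀ hS).1 hγ
  nlinarith [mul_le_mul_of_nonneg_left hγ' (mul_nonneg hα (sq_nonneg ‖z - u‖))]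

theorem StrongConvexOn.norm_sub_smul_gradient_sub_sq_le_of_mul_le_one [Nontrivial E]
    (hsc : StrongConvexOn univ μ f) (hf : Differentiable ℝ f) (hK : LipschitzWith K (∇ f))
    (hμ : 0 < μ) {u : E} (hu : ∀ z, f u ≤ f z) {α γ : ℝ} (hα : 0 ≤ α) (hαK : α * K ≤ 1)
    (hγ : γ ≤ μ * K / (μ + K)) (z : E) :
    ‖z - α • ∇ f z - u‖ ^ 2 ≤ (1 - 2 * α * γ) * ‖z - u‖ ^ 2 := by
  have hμK := hsc.le_of_lipschitzWith_gradient hf hK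
  exact hsc.norm_sub_smul_gradient_sub_sq_le hf hK hμ hμK hu hα (by nlinarith) hγ z

end StrongConvex

end Gradient

theorem le_add_div_of_le_mul_add {e : ℕ → ℝ} {q b : ℝ} (he : 0 ≤ e 0) (hq : 0 ≤ q)
    (hq1 : q < 1) (hb : 0 ≤ b) (h : ∀ k, e (k + 1) ≤ q * (e k + b)) (k : ℕ) :
    e k ≤ e 0 + b / (1 - q) := by
  have hc : b / (1 - q) * (1 - q) = b := div_mul_cancel₀ b (sub_pos.2 hq1).ne'
  induction k with
  | zero => exact le_add_of_nonneg_right (div_nonneg hb (sub_pos.2 hq1).le)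
  | succ k ih =>
    calc e (k + 1) ≤ q * (e k + b) := h k
      _ ≤ q * (e 0 + b / (1 - q) + b) := by gcongr
      _ ≤ e 0 + b / (1 - q) := by nlinarith [mul_nonneg (sub_pos.2 hq1).le (add_nonneg he hb)]

section Blocks

variable {n p : ℕ}

theorem kron_sub (M : Matrix (Fin n) (Fin n) ℝ) (a b : CVec n p) :
    kron M (a - b) = kron M a - kron M b := by
  ext i : 1
  simp [kron, smul_sub, sum_sub_distrib]

theorem norm_kron_le {M : Matrix (Fin n) (Fin n) ℝ} (hM : M ∈ doublyStochastic ℝ (Fin n))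
    (v : CVec n p) : ‖kron M v‖ ≤ ‖v‖ := by
  have hsq : ConvexOn ℝ Set.univ fun w : Vec p => ‖w‖ ^ 2 :=
    (convexOn_norm convex_univ).pow (fun _ _ => norm_nonneg _) 2
  refine le_of_pow_le_pow_left₀ two_ne_zero (norm_nonneg _) ?_
  calc ‖kron M v‖ ^ 2 = ∑ i, ‖∑ j, M i j • v j‖ ^ 2 := by
        simp [kron, PiLp.norm_sq_eq_of_L2]
    _ ≤ ∑ i, ∑ j, M i j * ‖v j‖ ^ 2 := by
        gcongr with i
        exact hsq.map_sum_le (fun j _ => nonneg_of_mem_doublyStochastic hM)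
          (sum_row_of_mem_doublyStochastic hM i) (fun j _ => Set.mem_univ _)
    _ = ‖v‖ ^ 2 := by
        rw [sum_comm, PiLp.norm_sq_eq_of_L2]
        simp [← sum_mul, sum_col_of_mem_doublyStochastic hM]

theorem norm_kron_sub_le {M : Matrix (Fin n) (Fin n) ℝ} (hM : M ∈ doublyStochastic ℝ (Fin n))
    (v u : CVec n p) : ‖kron M v - u‖ ≤ ‖v - u‖ + 2 * ‖u‖ := by
  calc ‖kron M v - u‖ = ‖kron M (v - u) + (kron M u - u)‖ := by rw [kron_sub]; abel_nf
    _ ≤ ‖kron M (v - u)‖ + (‖kron M u‖ + ‖u‖) := norm_add_le_of_le le_rfl (norm_sub_le _ _)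
    _ ≤ ‖v - u‖ + 2 * ‖u‖ := by linarith [norm_kron_le hM (v - u), norm_kron_le hM u]

theorem norm_sub_smul_gradConcat_sub_le {f : Fin n → Vec p → ℝ} {u : CVec n p} {α ν : ℝ}
    (hν : ν ≤ 2) (h : ∀ i z, ‖z - α • ∇ (f i) z - u i‖ ^ 2 ≤ (1 - ν) * ‖z - u i‖ ^ 2)
    (z : CVec n p) : ‖z - α • gradConcat f z - u‖ ≤ (1 - ν / 2) * ‖z - u‖ := by
  refine le_of_pow_le_pow_left₀ two_ne_zero (by nlinarith [norm_nonneg (z - u)]) ?_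
  calc ‖z - α • gradConcat f z - u‖ ^ 2 ≤ (1 - ν) * ‖z - u‖ ^ 2 := by
        rw [PiLp.norm_sq_eq_of_L2, PiLp.norm_sq_eq_of_L2, mul_sum]
        exact sum_le_sum fun i _ => h i (z i)
    _ ≤ ((1 - ν / 2) * ‖z - u‖) ^ 2 := by nlinarith [sq_nonneg ν, sq_nonneg ‖z - u‖]

theorem norm_sub_le_of_nearDGD {M : Matrix (Fin n) (Fin n) ℝ}
    (hM : M ∈ doublyStochastic ℝ (Fin n)) {f : Fin n → Vec p → ℝ} {u : CVec n p} {α ν : ℝ}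
    (hν0 : 0 < ν) (hν2 : ν ≤ 2)
    (hcontr : ∀ i z, ‖z - α • ∇ (f i) z - u i‖ ^ 2 ≤ (1 - ν) * ‖z - u i‖ ^ 2)
    {x y : ℕ → CVec n p} (hx : ∀ k, x k = kron M (y k))
    (hy : ∀ k, y (k + 1) = x k - α • gradConcat f (x k)) (k : ℕ) :
    ‖y k - u‖ ≤ ‖y 0 - u‖ + 4 / ν * ‖u‖ := by
  have hstep : ∀ k, ‖y (k + 1) - u‖ ≤ (1 - ν / 2) * (‖y k - u‖ + 2 * ‖u‖) := by
    intro k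
    rw [hy k]
    refine (norm_sub_smul_gradConcat_sub_le hν2 hcontr (x k)).trans ?_
    gcongr
    · linarith
    · exact hx k ▸ norm_kron_sub_le hM (y k) u
  convert le_add_div_of_le_mul_add (e := fun k => ‖y k - u‖) (norm_nonneg _) (by linarith)
    (by linarith) (by positivity) hstep k using 2
  rw [sub_sub_cancel]
  field_simp
  ring

end Blocks

theorem near_dgdt_bounded_iterates_general
    (n p t : ℕ) (hp : 1 ≤ p)
    -- local objective functions: μᵢ-strongly convex, differentiable,
    -- with Lᵢ-Lipschitz gradients
    (f : Fin n → Vec p → ℝ) (μ Lc : Fin n → ℝ) (L : ℝ)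
    (hμpos : ∀ i, 0 < μ i) (hLpos : ∀ i, 0 < Lc i)
    (hsc : ∀ i, StrongConvexOn Set.univ (μ i) (f i))
    (hdiff : ∀ i, Differentiable ℝ (f i))
    (hLip : ∀ i, LipschitzWith (Real.toNNReal (Lc i)) (fun z => gradient (f i) z))
    (hLmax : IsGreatest (Set.range Lc) L)
    -- u*: the concatenation of the unique minimizers uᵢ* of the fᵢ
    (ustar : CVec n p) (hustar : ∀ i, ∀ z, f i (ustar i) ≤ f i z)
    -- W is symmetric, doubly stochastic, with eigenvalues in (−1, 1]
    (W : Matrix (Fin n) (Fin n) ℝ)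
    (hrow : ∀ i, ∑ j, W i j = 1) (hcol : ∀ j, ∑ i, W i j = 1)
    (hWnn : ∀ i j, 0 ≤ W i j)
    -- stepsize 0 < α < 1/L
    (α : ℝ) (hα : 0 < α) (hαlt : α < 1 / L)
    -- NEAR-DGDᵗ iterates: x_k = Zᵗ y_k, y_{k+1} = x_k − α∇f(x_k), with y₀ = (s₀;…;s₀)
    (x y : ℕ → CVec n p)
    (hxdef : ∀ k, x k = kron (W ^ t) (y k))
    (hydef : ∀ k, y (k + 1) = x k - α • gradConcat f (x k))
    -- γ = minᵢ μᵢLᵢ/(μᵢ + Lᵢ), ν = 2αγ, and the bound D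
    (γ ν D : ℝ)
    (hγ : IsLeast (Set.range fun i => μ i * Lc i / (μ i + Lc i)) γ)
    (hν : ν = 2 * α * γ)
    (hD : D = ‖y 0 - ustar‖ + ((ν + 4) / ν) * ‖ustar‖)
    :
    ∀ k, 1 ≤ k → ‖x k‖ ≤ D ∧ ‖y k‖ ≤ D := by
  have : Nonempty (Fin p) := ⟨⟨0, hp⟩⟩
  obtain ⟨i₀, hi₀⟩ := hLmax.1
  have hαL : ∀ i, α * Lc i ≤ 1 := fun i =>
    ((mul_le_mul_of_nonneg_left (hLmax.2 ⟨i, rfl⟩) hα.le).trans_lt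
      ((lt_div_iff₀ (hi₀ ▸ hLpos i₀)).1 hαlt)).le
  obtain ⟨j, hj⟩ := hγ.1
  have hμj := hμpos j
  have hLj := hLpos j
  have hν0 : 0 < ν := by rw [hν, ← hj]; positivity
  have hν2 : ν ≤ 2 := by
    have : γ ≤ Lc j := hj ▸ div_le_of_le_mul₀ (by positivity) hLj.le (by nlinarith)
    rw [hν]; nlinarith [hαL j]
  have hcontr : ∀ i z, ‖z - α • ∇ (f i) z - ustar i‖ ^ 2 ≤ (1 - ν) * ‖z - ustar i‖ ^ 2 := by
    intro i z
    have hK : ((Lc i).toNNReal : ℝ) = Lc i := Real.coe_toNNReal _ (hLpos i).le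
    rw [hν]
    exact (hsc i).norm_sub_smul_gradient_sub_sq_le_of_mul_le_one (hdiff i) (hLip i) (hμpos i)
      (hustar i) hα.le (by rw [hK]; exact hαL i) (by rw [hK]; exact hγ.2 ⟨i, rfl⟩) z
  have hZ : W ^ t ∈ doublyStochastic ℝ (Fin n) :=
    pow_mem (mem_doublyStochastic_iff_sum.2 ⟨hWnn, hrow, hcol⟩) t
  have hy : ∀ k, ‖y k‖ ≤ D := fun k => by
    have hD' : D = ‖y 0 - ustar‖ + 4 / ν * ‖ustar‖ + ‖ustar‖ := by rw [hD]; field_simp; ring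
    linarith [norm_sub_le_of_nearDGD hZ hν0 hν2 hcontr hxdef hydef k,
      norm_le_norm_sub_add (y k) ustar]
  intro k _
  exact ⟨hxdef k ▸ (norm_kron_le hZ (y k)).trans (hy k), hy k⟩

/-- Bounded iterates of NEAR-DGDᵗ: if `0 < α < 1/L` and `y_{i,0} = s₀`
for all `i`, then `‖x_k‖ ≤ D` and `‖y_k‖ ≤ D` for all `k ≥ 1`, where
`D = ‖y₀ − u*‖ + ((ν + 4)/ν)‖u*‖`. -/
theorem near_dgdt_bounded_iterates
    (n p t : ℕ) (hn : 1 ≤ n) (hp : 1 ≤ p) (ht : 1 ≤ t)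
    -- local objective functions: μᵢ-strongly convex, differentiable,
    -- with Lᵢ-Lipschitz gradients
    (f : Fin n → Vec p → ℝ) (μ Lc : Fin n → ℝ) (L : ℝ)
    (hμpos : ∀ i, 0 < μ i) (hLpos : ∀ i, 0 < Lc i)
    (hsc : ∀ i, StrongConvexOn Set.univ (μ i) (f i))
    (hdiff : ∀ i, Differentiable ℝ (f i))
    (hLip : ∀ i, LipschitzWith (Real.toNNReal (Lc i)) (fun z => gradient (f i) z))
    (hLmax : IsGreatest (Set.range Lc) L)
    -- u*: the concatenation of the unique minimizers uᵢ* of the fᵢ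
    (ustar : CVec n p) (hustar : ∀ i, ∀ z, f i (ustar i) ≤ f i z)
    -- W is symmetric, doubly stochastic, with eigenvalues in (−1, 1]
    (W : Matrix (Fin n) (Fin n) ℝ) (hWsymm : W.IsHermitian)
    (hrow : ∀ i, ∑ j, W i j = 1) (hcol : ∀ j, ∑ i, W i j = 1)
    (hWnn : ∀ i j, 0 ≤ W i j)
    (heig : ∀ i, hWsymm.eigenvalues i ∈ Set.Ioc (-1 : ℝ) 1)
    -- stepsize 0 < α < 1/L
    (α : ℝ) (hα : 0 < α) (hαlt : α < 1 / L)
    -- NEAR-DGDᵗ iterates: x_k = Zᵗ y_k, y_{k+1} = x_k − α∇f(x_k), with y₀ = (s₀;…;s₀)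
    (x y : ℕ → CVec n p)
    (hxdef : ∀ k, x k = kron (W ^ t) (y k))
    (hydef : ∀ k, y (k + 1) = x k - α • gradConcat f (x k))
    (s0 : Vec p) (hy0 : ∀ i, y 0 i = s0)
    -- γ = minᵢ μᵢLᵢ/(μᵢ + Lᵢ), ν = 2αγ, and the bound D
    (γ ν D : ℝ)
    (hγ : IsLeast (Set.range fun i => μ i * Lc i / (μ i + Lc i)) γ)
    (hν : ν = 2 * α * γ)
    (hD : D = ‖y 0 - ustar‖ + ((ν + 4) / ν) * ‖ustar‖)
    :
    ∀ k, 1 ≤ k → ‖x k‖ ≤ D ∧ ‖y k‖ ≤ D :=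
  near_dgdt_bounded_iterates_general n p t hp f μ Lc L hμpos hLpos hsc hdiff hLip hLmax ustar hustar
    W hrow hcol hWnn α hα hαlt x y hxdef hydef γ ν D hγ hν hD
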